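/- For every real number ξ and all points x, y, z ∈ ℝ³, the determinant det(x, y, z) of the 3×3 matrix with rows x, y, z satisfies |det(x, y, z)| ≤ 2(‖x‖·L_ξ(y)·L_ξ(z) + ‖y‖·L_ξ(x)·L_ξ(z) + ‖z‖·L_ξ(x)·L_ξ(y)). -/

import Mathlib

/-!
Subtracting `ξ` resp. `ξ²` times the first column from the other two columns does not change
`det(x, y, z)`, and turns the last two entries of each row `w` into the two quantities whose
maximum is `L_ξ(w)`. Expanding along the first column, each of the three terms is a first
coordinate, at most `‖w‖`, times a `2 × 2` minor of such entries, at most `2 L_ξ L_ξ`.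
-/

/-- Norm of a point of ℝ³: max of absolute values of coordinates. -/
noncomputable def nrmR (x : ℝ × ℝ × ℝ) : ℝ := max |x.1| (max |x.2.1| |x.2.2|)

/-- L_ξ(x) = max(|x₁ − ξx₀|, |x₂ − ξ²x₀|). -/
noncomputable def LxiR (ξ : ℝ) (x : ℝ × ℝ × ℝ) : ℝ :=
  max |x.2.1 - ξ * x.1| |x.2.2 - ξ ^ 2 * x.1|

/-- Determinant of the 3×3 matrix with rows x, y, z. -/
noncomputable def det3R (x y z : ℝ × ℝ × ℝ) : ℝ :=
  x.1 * (y.2.1 * z.2.2 - y.2.2 * z.2.1)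
    - x.2.1 * (y.1 * z.2.2 - y.2.2 * z.1)
    + x.2.2 * (y.1 * z.2.1 - y.2.1 * z.1)

section OrderedRing

variable {R : Type*} [Ring R] [LinearOrder R] [IsOrderedRing R]

lemma abs_mul_le_mul_of_abs_le {a b A B : R} (ha : |a| ≤ A) (hb : |b| ≤ B) :
    |a * b| ≤ A * B := by
  rw [abs_mul]
  exact mul_le_mul ha hb (abs_nonneg b) ((abs_nonneg a).trans ha)

lemma abs_mul_sub_mul_le {a b c d B C : R} (ha : |a| ≤ B) (hb : |b| ≤ B) (hc : |c| ≤ C)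
    (hd : |d| ≤ C) : |a * d - b * c| ≤ 2 * (B * C) :=
  calc |a * d - b * c| ≤ |a * d| + |b * c| := abs_sub _ _
    _ ≤ B * C + B * C :=
      add_le_add (abs_mul_le_mul_of_abs_le ha hd) (abs_mul_le_mul_of_abs_le hb hc)
    _ = 2 * (B * C) := (two_mul _).symm

end OrderedRing

def deviation (ξ : ℝ) (x : ℝ × ℝ × ℝ) : ℝ × ℝ := (x.2.1 - ξ * x.1, x.2.2 - ξ ^ 2 * x.1)

def det2 (u v : ℝ × ℝ) : ℝ := u.1 * v.2 - u.2 * v.1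

lemma det3R_eq_expand_deviation (ξ : ℝ) (x y z : ℝ × ℝ × ℝ) :
    det3R x y z = x.1 * det2 (deviation ξ y) (deviation ξ z)
      - y.1 * det2 (deviation ξ x) (deviation ξ z)
      + z.1 * det2 (deviation ξ x) (deviation ξ y) := by
  simp only [det3R, det2, deviation]
  ring

lemma abs_fst_le_nrmR (x : ℝ × ℝ × ℝ) : |x.1| ≤ nrmR x := le_max_left _ _

lemma abs_deviation_fst_le_LxiR (ξ : ℝ) (x : ℝ × ℝ × ℝ) : |(deviation ξ x).1| ≤ LxiR ξ x :=
  le_max_left _ _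

lemma abs_deviation_snd_le_LxiR (ξ : ℝ) (x : ℝ × ℝ × ℝ) : |(deviation ξ x).2| ≤ LxiR ξ x :=
  le_max_right _ _

lemma abs_det2_deviation_le (ξ : ℝ) (x y : ℝ × ℝ × ℝ) :
    |det2 (deviation ξ x) (deviation ξ y)| ≤ 2 * (LxiR ξ x * LxiR ξ y) :=
  abs_mul_sub_mul_le (abs_deviation_fst_le_LxiR ξ x) (abs_deviation_snd_le_LxiR ξ x)
    (abs_deviation_fst_le_LxiR ξ y) (abs_deviation_snd_le_LxiR ξ y)

lemma abs_fst_mul_det2_deviation_le (ξ : ℝ) (x y z : ℝ × ℝ × ℝ) :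
    |x.1 * det2 (deviation ξ y) (deviation ξ z)| ≤ nrmR x * (2 * (LxiR ξ y * LxiR ξ z)) :=
  abs_mul_le_mul_of_abs_le (abs_fst_le_nrmR x) (abs_det2_deviation_le ξ y z)

/-- Bound for the 3×3 determinant. -/
theorem stmt19 (ξ : ℝ) (x y z : ℝ × ℝ × ℝ) :
    |det3R x y z| ≤ 2 * (nrmR x * LxiR ξ y * LxiR ξ z + nrmR y * LxiR ξ x * LxiR ξ z
      + nrmR z * LxiR ξ x * LxiR ξ y) := by
  have hsum := abs_add_three (x.1 * det2 (deviation ξ y) (deviation ξ z))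
    (-(y.1 * det2 (deviation ξ x) (deviation ξ z))) (z.1 * det2 (deviation ξ x) (deviation ξ y))
  rw [abs_neg, ← sub_eq_add_neg, ← det3R_eq_expand_deviation] at hsum
  linarith [abs_fst_mul_det2_deviation_le ξ x y z, abs_fst_mul_det2_deviation_le ξ y x z,
    abs_fst_mul_det2_deviation_le ξ z x y]
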